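/- (Maximizer normalization.) Suppose the multiplicities satisfy Σ_{j=1}^k λ_j > n. If w ∈ (0,1]^k has maximal component m = max_j w_j with m < 1, then rescaling by c = 1/m strictly increases the log-likelihood: l(w/m, θ, σ²) > l(w, θ, σ²) for every θ ∈ ℝ and σ² ≥ 0. Consequently, any maximizer of l over (0,1]^k × ℝ × [0,∞) has its largest weight component equal to 1. -/

import Mathlib

/-!
Dividing `w` by `m` divides every `A_i` by `m` and lowers `Σ λ_j log w_j` by `(Σ λ_j) log m`, so
`l(w/m, θ, σ²) = l(w, θ, σ²) + (n - Σ λ_j) log m`, and both factors are negative when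
`Σ λ_j > n` and `m < 1`. The identity needs `A_i > 0`, which holds because the outermost cell
`{|y| ≥ b_{i,k-1}}` contains a half-line and the Gaussian density is positive. A maximizer whose
largest weight were below `1` would therefore be beaten by its own normalization.
-/

open MeasureTheory Real Set Filter Topology

/-- Standard normal density. -/
noncomputable def stdPhi (z : ℝ) : ℝ := (Real.sqrt (2 * Real.pi))⁻¹ * Real.exp (-z ^ 2 / 2)

/-- `η_i = √(u_i² + σ²)`. -/
noncomputable def etaFn (u sigma2 : ℝ) : ℝ := Real.sqrt (u ^ 2 + sigma2)

/-- The cell probability `H`: Gaussian `N(θ, η²)` integral over the annulus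
`{y : b ≤ |y| < b'}`, with (possibly infinite) extended-real thresholds. -/
noncomputable def cellH (b b' : EReal) (u θ sigma2 : ℝ) : ℝ :=
  ∫ x in {x : ℝ | b ≤ ((|x| : ℝ) : EReal) ∧ ((|x| : ℝ) : EReal) < b'},
    (etaFn u sigma2)⁻¹ * stdPhi ((x - θ) / etaFn u sigma2)

/-- The log-likelihood `l(w, θ, σ²)` of Dear–Begg selection models. For study `i`
the thresholds on the outcome scale are `b i 0 = 0 ≤ b i 1 ≤ … ≤ b i k = ∞`. -/
noncomputable def loglik {n k : ℕ} (y u : Fin n → ℝ) (lam : Fin k → ℝ)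
    (b : Fin n → ℕ → EReal) (w : Fin k → ℝ) (θ sigma2 : ℝ) : ℝ :=
  -((n : ℝ) / 2) * Real.log (2 * Real.pi)
    + ∑ j, lam j * Real.log (w j)
    - ∑ i, Real.log (etaFn (u i) sigma2)
    - (1 / 2) * ∑ i, ((y i - θ) / etaFn (u i) sigma2) ^ 2
    - ∑ i, Real.log (∑ j : Fin k, w j * cellH (b i (j : ℕ)) (b i ((j : ℕ) + 1)) (u i) θ sigma2)

open ProbabilityTheory
open scoped NNReal

lemma etaFn_pos {u sigma2 : ℝ} (hu : 0 < u) (hs : 0 ≤ sigma2) : 0 < etaFn u sigma2 :=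
  Real.sqrt_pos.2 (by positivity)

lemma inv_mul_stdPhi_eq_gaussianPDFReal {η : ℝ} (hη : 0 < η) (θ x : ℝ) :
    η⁻¹ * stdPhi ((x - θ) / η) = gaussianPDFReal θ (η ^ 2).toNNReal x := by
  have hsqrt : √(2 * π * η ^ 2) = √(2 * π) * η := by
    rw [Real.sqrt_mul (by positivity), Real.sqrt_sq hη.le]
  rw [gaussianPDFReal, Real.coe_toNNReal _ (sq_nonneg η), hsqrt, stdPhi, mul_inv, div_pow]
  ring_nf

lemma cellH_eq_setIntegral_gaussianPDFReal {u sigma2 : ℝ} (hu : 0 < u) (hs : 0 ≤ sigma2)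
    (b b' : EReal) (θ : ℝ) :
    cellH b b' u θ sigma2 = ∫ x in {x : ℝ | b ≤ ((|x| : ℝ) : EReal) ∧ ((|x| : ℝ) : EReal) < b'},
      gaussianPDFReal θ (etaFn u sigma2 ^ 2).toNNReal x := by
  simp only [cellH, inv_mul_stdPhi_eq_gaussianPDFReal (etaFn_pos hu hs)]

lemma setIntegral_gaussianPDFReal_pos {s : Set ℝ} (hs : 0 < volume s) (μ : ℝ) {v : ℝ≥0}
    (hv : v ≠ 0) : 0 < ∫ x in s, gaussianPDFReal μ v x := by
  rw [setIntegral_pos_iff_support_of_nonneg_ae (ae_of_all _ (gaussianPDFReal_nonneg μ v))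
    (integrable_gaussianPDFReal μ v).integrableOn, Function.support_eq_univ
    fun x => (gaussianPDFReal_pos μ v x hv).ne', univ_inter]
  exact hs

lemma cellH_nonneg {u sigma2 : ℝ} (hu : 0 < u) (hs : 0 ≤ sigma2) (b b' : EReal) (θ : ℝ) :
    0 ≤ cellH b b' u θ sigma2 := by
  rw [cellH_eq_setIntegral_gaussianPDFReal hu hs]
  exact setIntegral_nonneg_of_ae (ae_of_all _ (gaussianPDFReal_nonneg _ _))

lemma cellH_top_pos {u sigma2 : ℝ} (hu : 0 < u) (hs : 0 ≤ sigma2) {b : EReal} (hb : b ≠ ⊤)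
    (θ : ℝ) : 0 < cellH b ⊤ u θ sigma2 := by
  obtain ⟨r, hbr, -⟩ := EReal.lt_iff_exists_real_btwn.1 (lt_top_iff_ne_top.2 hb)
  have hhalf : Ici (max r 0) ⊆ {x : ℝ | b ≤ ((|x| : ℝ) : EReal) ∧ ((|x| : ℝ) : EReal) < ⊤} := by
    intro x hx
    have hx : max r 0 ≤ x := hx
    refine ⟨hbr.le.trans (EReal.coe_le_coe_iff.2 ?_), EReal.coe_lt_top _⟩
    rw [abs_of_nonneg ((le_max_right r 0).trans hx)]
    exact (le_max_left r 0).trans hx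
  rw [cellH_eq_setIntegral_gaussianPDFReal hu hs]
  refine setIntegral_gaussianPDFReal_pos ?_ θ ?_
  · exact (by simp : 0 < volume (Ici (max r 0))).trans_le (measure_mono hhalf)
  · simpa using (etaFn_pos hu hs).ne'

lemma sum_mul_cellH_pos {k : ℕ} (hk : 1 ≤ k) {w : Fin k → ℝ} (hw : ∀ j, 0 < w j)
    {u sigma2 : ℝ} (hu : 0 < u) (hs : 0 ≤ sigma2) {bi : ℕ → EReal} (hbk : bi k = ⊤)
    (hlast : bi (k - 1) ≠ ⊤) (θ : ℝ) :
    0 < ∑ j : Fin k, w j * cellH (bi j) (bi (j + 1)) u θ sigma2 := by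
  obtain ⟨k, rfl⟩ := Nat.exists_eq_add_of_le' hk
  refine Finset.sum_pos' (fun j _ => mul_nonneg (hw j).le (cellH_nonneg hu hs _ _ θ))
    ⟨Fin.last k, Finset.mem_univ _, mul_pos (hw _) ?_⟩
  simpa [hbk] using cellH_top_pos hu hs hlast θ

lemma loglik_div_const {n k : ℕ} (y u : Fin n → ℝ) (lam : Fin k → ℝ) (b : Fin n → ℕ → EReal)
    {w : Fin k → ℝ} (hw : ∀ j, w j ≠ 0) (θ sigma2 : ℝ) {m : ℝ} (hm : m ≠ 0)
    (hA : ∀ i, ∑ j : Fin k, w j * cellH (b i j) (b i (j + 1)) (u i) θ sigma2 ≠ 0) :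
    loglik y u lam b (fun j => w j / m) θ sigma2
      = loglik y u lam b w θ sigma2 + ((n : ℝ) - ∑ j, lam j) * Real.log m := by
  have hlam : ∑ j, lam j * Real.log (w j / m)
      = ∑ j, lam j * Real.log (w j) - (∑ j, lam j) * Real.log m := by
    simp only [Real.log_div (hw _) hm, mul_sub, Finset.sum_sub_distrib, Finset.sum_mul]
  have hA_div : ∀ i, Real.log (∑ j : Fin k, w j / m * cellH (b i j) (b i (j + 1)) (u i) θ sigma2)
      = Real.log (∑ j : Fin k, w j * cellH (b i j) (b i (j + 1)) (u i) θ sigma2) - Real.log m := by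
    intro i
    simp only [div_mul_eq_mul_div, ← Finset.sum_div, Real.log_div (hA i) hm]
  simp only [loglik, hlam, hA_div, Finset.sum_sub_distrib, Finset.sum_const, Finset.card_univ,
    Fintype.card_fin, nsmul_eq_mul]
  ring

lemma loglik_lt_loglik_div {n k : ℕ} (hk : 1 ≤ k) (y : Fin n → ℝ) {u : Fin n → ℝ}
    (hu : ∀ i, 0 < u i) {lam : Fin k → ℝ} (hsum : (n : ℝ) < ∑ j, lam j)
    {b : Fin n → ℕ → EReal} (hbk : ∀ i, b i k = ⊤) (hblt : ∀ i, ∀ j, j < k → b i j ≠ ⊤)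
    {w : Fin k → ℝ} (hw : ∀ j, 0 < w j) (θ : ℝ) {sigma2 : ℝ} (hs : 0 ≤ sigma2) {m : ℝ}
    (hm0 : 0 < m) (hm1 : m < 1) :
    loglik y u lam b w θ sigma2 < loglik y u lam b (fun j => w j / m) θ sigma2 := by
  have hA i := sum_mul_cellH_pos hk hw (hu i) hs (hbk i) (hblt i _ (by omega)) θ
  rw [loglik_div_const y u lam b (fun j => (hw j).ne') θ sigma2 hm0.ne' fun i => (hA i).ne']
  have := mul_pos_of_neg_of_neg (sub_neg.2 hsum) (Real.log_neg hm0 hm1)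
  linarith

theorem loglik_maximizer_normalization_general
    {n k : ℕ} (hk : 1 ≤ k)
    (y u : Fin n → ℝ) (hu : ∀ i, 0 < u i)
    (lam : Fin k → ℝ)
    (hsum : (n : ℝ) < ∑ j, lam j)
    (b : Fin n → ℕ → EReal)
    (hbk : ∀ i, b i k = ⊤)
    (hblt : ∀ i, ∀ j, j < k → b i j ≠ ⊤) :
    (∀ (w : Fin k → ℝ) (θ sigma2 m : ℝ),
      (∀ j, 0 < w j ∧ w j ≤ 1) → 0 ≤ sigma2 →
      (∀ j, w j ≤ m) → (∃ j, w j = m) → m < 1 →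
        loglik y u lam b w θ sigma2 < loglik y u lam b (fun j => w j / m) θ sigma2) ∧
    (∀ (w : Fin k → ℝ) (θ sigma2 : ℝ),
      (∀ j, 0 < w j ∧ w j ≤ 1) → 0 ≤ sigma2 →
      (∀ (w' : Fin k → ℝ) (θ' sigma2' : ℝ),
        (∀ j, 0 < w' j ∧ w' j ≤ 1) → 0 ≤ sigma2' →
          loglik y u lam b w' θ' sigma2' ≤ loglik y u lam b w θ sigma2) →
      ∃ j, w j = 1) := by
  refine ⟨fun w θ sigma2 m hw hs _ ⟨j, hj⟩ hm1 =>
    loglik_lt_loglik_div hk y hu hsum hbk hblt (fun j => (hw j).1) θ hs (hj ▸ (hw j).1) hm1, ?_⟩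
  intro w θ sigma2 hw hs hmax
  have : Nonempty (Fin k) := Fin.pos_iff_nonempty.1 hk
  obtain ⟨j, hj⟩ := Finite.exists_max w
  refine ⟨j, (hw j).2.eq_or_lt.resolve_right fun hlt => ?_⟩
  have hwj := (hw j).1
  have hrescaled : ∀ i, 0 < w i / w j ∧ w i / w j ≤ 1 :=
    fun i => ⟨div_pos (hw i).1 hwj, (div_le_one hwj).2 (hj i)⟩
  exact (hmax _ θ sigma2 hrescaled hs).not_gt
    (loglik_lt_loglik_div hk y hu hsum hbk hblt (fun i => (hw i).1) θ hs hwj hlt)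

/-- maximizer normalization: if `Σ_j λ_j > n`, then rescaling a
weight vector `w ∈ (0,1]^k` whose maximal component `m` satisfies `m < 1` by
`1/m` strictly increases the log-likelihood; consequently, any maximizer of `l`
over `(0,1]^k × ℝ × [0,∞)` has its largest weight component equal to `1`. -/
theorem loglik_maximizer_normalization
    {n k : ℕ} (hn : 1 ≤ n) (hk : 1 ≤ k)
    (y u : Fin n → ℝ) (hu : ∀ i, 0 < u i)
    (lam : Fin k → ℝ) (hlam : ∀ j, 0 < lam j)
    (hsum : (n : ℝ) < ∑ j, lam j)
    (b : Fin n → ℕ → EReal)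
    (hb0 : ∀ i, b i 0 = 0) (hbk : ∀ i, b i k = ⊤)
    (hbmono : ∀ i, Monotone (b i))
    (hblt : ∀ i, ∀ j, j < k → b i j ≠ ⊤) :
    (∀ (w : Fin k → ℝ) (θ sigma2 m : ℝ),
      (∀ j, 0 < w j ∧ w j ≤ 1) → 0 ≤ sigma2 →
      (∀ j, w j ≤ m) → (∃ j, w j = m) → m < 1 →
        loglik y u lam b w θ sigma2 < loglik y u lam b (fun j => w j / m) θ sigma2) ∧
    (∀ (w : Fin k → ℝ) (θ sigma2 : ℝ),
      (∀ j, 0 < w j ∧ w j ≤ 1) → 0 ≤ sigma2 →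
      (∀ (w' : Fin k → ℝ) (θ' sigma2' : ℝ),
        (∀ j, 0 < w' j ∧ w' j ≤ 1) → 0 ≤ sigma2' →
          loglik y u lam b w' θ' sigma2' ≤ loglik y u lam b w θ sigma2) →
      ∃ j, w j = 1) :=
  loglik_maximizer_normalization_general hk y u hu lam hsum b hbk hblt
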